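/- arXiv:2201.10070 — 2 statements merged into one kernel-verified Lean document; each statement's English description precedes it below -/
import Mathlib

section
/- Let M1 and M2 be two finite-horizon MDPs over finite state space S and finite action space A, with the same reward function r and horizon H, but transition dynamics p1 and p2. Define D = max over (s,a) of the ℓ1 distance Σ_{s'} |p1(s'|s,a) − p2(s'|s,a)|, let r_max bound |r(s,a)|, and let V_max bound the absolute value of the value of any policy in either MDP. If V*_{M,h}(s) denotes the optimal value function at horizon step h (with V*_{M,H}(s) = 0), then for every h ≤ H and every state s, |V*_{M1,h}(s) − V*_{M2,h}(s)| ≤ D·(r_max + V_max)·(H − h). -/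
lemma aux_abs_ciSup_sub {A : Type*} [Fintype A] [Nonempty A] (f g : A → ℝ) (c : ℝ)
    (h : ∀ a, |f a - g a| ≤ c) : |(⨆ a, f a) - ⨆ a, g a| ≤ c := by
  rw [abs_sub_le_iff]
  constructor
  · rw [sub_le_iff_le_add]
    refine ciSup_le fun a => ?_
    have h1 := le_ciSup (Set.Finite.bddAbove (Set.finite_range g)) a
    have h2 := (abs_sub_le_iff.mp (h a)).1
    linarith
  · rw [sub_le_iff_le_add]
    refine ciSup_le fun a => ?_
    have h1 := le_ciSup (Set.Finite.bddAbove (Set.finite_range f)) a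
    have h2 := (abs_sub_le_iff.mp (h a)).2
    linarith

/-- **Theorem 1 (MOORe).** For two finite-horizon MDPs `M1`, `M2` over finite state
space `S` and finite action space `A`, with the same reward `r` and horizon `H` but
transition dynamics `p1`, `p2`, if `D` bounds the ℓ1 distance between the dynamics,
`rmax` bounds the rewards, and `Vmax` bounds the optimal value functions, then for every
`h ≤ H` and every state `s`, `|V1 h s - V2 h s| ≤ D * (rmax + Vmax) * (H - h)`. -/
theorem stmt_0 {S A : Type*} [Fintype S] [Fintype A] [Nonempty A]
    (p1 p2 : S → A → S → ℝ)
    (hp1 : ∀ s a, (∀ s', 0 ≤ p1 s a s') ∧ ∑ s', p1 s a s' = 1)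
    (hp2 : ∀ s a, (∀ s', 0 ≤ p2 s a s') ∧ ∑ s', p2 s a s' = 1)
    (r : S → A → ℝ) (H : ℕ) (γ : ℝ) (hγ : 0 < γ) (hγ1 : γ ≤ 1)
    (V1 V2 : ℕ → S → ℝ)
    (hV1H : ∀ s, V1 H s = 0) (hV2H : ∀ s, V2 H s = 0)
    (hV1 : ∀ h < H, ∀ s, V1 h s = ⨆ a, (r s a + γ * ∑ s', p1 s a s' * V1 (h + 1) s'))
    (hV2 : ∀ h < H, ∀ s, V2 h s = ⨆ a, (r s a + γ * ∑ s', p2 s a s' * V2 (h + 1) s'))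
    (D rmax Vmax : ℝ)
    (hD : ∀ s a, ∑ s', |p1 s a s' - p2 s a s'| ≤ D)
    (hr : ∀ s a, |r s a| ≤ rmax)
    (hVmax : ∀ h s, |V1 h s| ≤ Vmax ∧ |V2 h s| ≤ Vmax) :
    ∀ h ≤ H, ∀ s, |V1 h s - V2 h s| ≤ D * (rmax + Vmax) * ((H : ℝ) - h) := by
  intro h hh s0
  obtain ⟨a0⟩ := ‹Nonempty A›
  have hD0 : 0 ≤ D := le_trans (Finset.sum_nonneg fun _ _ => abs_nonneg _) (hD s0 a0)
  have hr0 : 0 ≤ rmax := le_trans (abs_nonneg _) (hr s0 a0)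
  have hV0 : 0 ≤ Vmax := le_trans (abs_nonneg _) (hVmax 0 s0).1
  suffices key : ∀ n h, h + n = H → ∀ s, |V1 h s - V2 h s| ≤ D * (rmax + Vmax) * n by
    have := key (H - h) h (by omega) s0
    have hcast : ((H - h : ℕ) : ℝ) = (H : ℝ) - h := by
      rw [Nat.cast_sub hh]
    rwa [hcast] at this
  intro n
  induction n with
  | zero =>
    intro h hh s
    have : h = H := by omega
    simp [this, hV1H, hV2H]
  | succ n ih =>
    intro h hh s
    have hlt : h < H := by omega
    rw [hV1 h hlt s, hV2 h hlt s]
    push_cast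
    refine aux_abs_ciSup_sub _ _ _ fun a => ?_
    have e1 : (r s a + γ * ∑ s', p1 s a s' * V1 (h + 1) s') -
        (r s a + γ * ∑ s', p2 s a s' * V2 (h + 1) s') =
        γ * ((∑ s', p1 s a s' * (V1 (h + 1) s' - V2 (h + 1) s')) +
          ∑ s', (p1 s a s' - p2 s a s') * V2 (h + 1) s') := by
      rw [← Finset.sum_add_distrib]
      have e0 : ∀ s', p1 s a s' * (V1 (h + 1) s' - V2 (h + 1) s') +
          (p1 s a s' - p2 s a s') * V2 (h + 1) s' =
          p1 s a s' * V1 (h + 1) s' - p2 s a s' * V2 (h + 1) s' := fun s' => by ring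
      simp_rw [e0]
      rw [Finset.sum_sub_distrib]
      ring
    have b1 : |∑ s', p1 s a s' * (V1 (h + 1) s' - V2 (h + 1) s')| ≤
        D * (rmax + Vmax) * n := by
      calc |∑ s', p1 s a s' * (V1 (h + 1) s' - V2 (h + 1) s')|
          ≤ ∑ s', |p1 s a s' * (V1 (h + 1) s' - V2 (h + 1) s')| :=
            Finset.abs_sum_le_sum_abs _ _
        _ ≤ ∑ s' : S, p1 s a s' * (D * (rmax + Vmax) * n) := by
            refine Finset.sum_le_sum fun s' _ => ?_
            rw [abs_mul, abs_of_nonneg ((hp1 s a).1 s')]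
            exact mul_le_mul_of_nonneg_left (ih (h + 1) (by omega) s') ((hp1 s a).1 s')
        _ = D * (rmax + Vmax) * n := by
            rw [← Finset.sum_mul, (hp1 s a).2, one_mul]
    have b2 : |∑ s', (p1 s a s' - p2 s a s') * V2 (h + 1) s'| ≤ D * Vmax := by
      calc |∑ s', (p1 s a s' - p2 s a s') * V2 (h + 1) s'|
          ≤ ∑ s', |(p1 s a s' - p2 s a s') * V2 (h + 1) s'| :=
            Finset.abs_sum_le_sum_abs _ _
        _ ≤ ∑ s' : S, |p1 s a s' - p2 s a s'| * Vmax := by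
            refine Finset.sum_le_sum fun s' _ => ?_
            rw [abs_mul]
            exact mul_le_mul_of_nonneg_left (hVmax (h + 1) s').2 (abs_nonneg _)
        _ = (∑ s', |p1 s a s' - p2 s a s'|) * Vmax := by rw [Finset.sum_mul]
        _ ≤ D * Vmax := mul_le_mul_of_nonneg_right (hD s a) hV0
    rw [e1, abs_mul, abs_of_pos hγ]
    have habs : |(∑ s', p1 s a s' * (V1 (h + 1) s' - V2 (h + 1) s')) +
        ∑ s', (p1 s a s' - p2 s a s') * V2 (h + 1) s'| ≤
        D * (rmax + Vmax) * n + D * Vmax :=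
      le_trans (abs_add_le _ _) (add_le_add b1 b2)
    have hnn : (0:ℝ) ≤ D * (rmax + Vmax) * n + D * Vmax := by positivity
    calc γ * |(∑ s', p1 s a s' * (V1 (h + 1) s' - V2 (h + 1) s')) +
          ∑ s', (p1 s a s' - p2 s a s') * V2 (h + 1) s'|
        ≤ 1 * (D * (rmax + Vmax) * n + D * Vmax) := by
          apply mul_le_mul hγ1 habs (abs_nonneg _) zero_le_one
      _ ≤ D * (rmax + Vmax) * (n + 1) := by nlinarith
end

section
/- (Telescoping lemma) Let M and M̂ be two MDPs with the same reward r(s,a) and the same initial distribution μ0, but dynamics p_M and p_{M̂} respectively. For a policy π define G^π_{M̂}(s,a) = E_{s'∼p_{M̂}(·|s,a)}[V^π_M(s')] − E_{s'∼p_M(·|s,a)}[V^π_M(s')]. Then η_{M̂}(π) − η_M(π) = γ · E_{(s,a)∼ρ^π_{M̂}}[G^π_{M̂}(s,a)]. -/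
/-- **Telescoping lemma.** Let `M` and `M̂` be two MDPs with the same reward `r` and
initial distribution `μ0`, but dynamics `pM` and `pMhat`. With `V` the value function of
policy `π` under `M` (Bellman equation), `ρ` the discounted occupancy measure of `π`
under `M̂` (fixed-point equation), and
`G s a = E_{s'∼pMhat}[V s'] − E_{s'∼pM}[V s']`, we have
`η_{M̂}(π) − η_M(π) = γ · Σ_{(s,a)} ρ(s,a) G(s,a)`, where
`η_{M̂}(π) = Σ_{(s,a)} ρ(s,a) r(s,a)` and `η_M(π) = Σ_s μ0(s) V(s)`. -/
theorem stmt_3 {S A : Type*} [Fintype S] [Fintype A]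
    (pM pMhat : S → A → S → ℝ) (r : S → A → ℝ) (π : S → A → ℝ) (μ0 : S → ℝ)
    (γ : ℝ) (hγ : 0 < γ) (hγ1 : γ < 1)
    (hpM : ∀ s a, (∀ s', 0 ≤ pM s a s') ∧ ∑ s', pM s a s' = 1)
    (hpMhat : ∀ s a, (∀ s', 0 ≤ pMhat s a s') ∧ ∑ s', pMhat s a s' = 1)
    (hπ : ∀ s, (∀ a, 0 ≤ π s a) ∧ ∑ a, π s a = 1)
    (hμ0 : (∀ s, 0 ≤ μ0 s) ∧ ∑ s, μ0 s = 1)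
    (V : S → ℝ)
    (hV : ∀ s, V s = ∑ a, π s a * (r s a + γ * ∑ s', pM s a s' * V s'))
    (ρ : S → A → ℝ)
    (hρ : ∀ s a, ρ s a = π s a * (μ0 s + γ * ∑ s'', ∑ a'', ρ s'' a'' * pMhat s'' a'' s))
    (G : S → A → ℝ)
    (hG : ∀ s a, G s a = (∑ s', pMhat s a s' * V s') - ∑ s', pM s a s' * V s') :
    (∑ s, ∑ a, ρ s a * r s a) - (∑ s, μ0 s * V s) = γ * ∑ s, ∑ a, ρ s a * G s a := by
  have pullγ : ∀ (f : S → A → ℝ), γ * ∑ s, ∑ a, f s a = ∑ s, ∑ a, γ * f s a := by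
    intro f
    rw [Finset.mul_sum]
    exact Finset.sum_congr rfl fun s _ => Finset.mul_sum _ _ _
  have pull1 : ∀ (g : S → ℝ), γ * ∑ s, g s = ∑ s, γ * g s := fun g => Finset.mul_sum _ _ _
  have key : ∀ s, ∑ a, ρ s a * (r s a + γ * ∑ s', pM s a s' * V s')
      = (μ0 s + γ * ∑ s'', ∑ a'', ρ s'' a'' * pMhat s'' a'' s) * V s := by
    intro s
    calc ∑ a, ρ s a * (r s a + γ * ∑ s', pM s a s' * V s')
        = ∑ a, (μ0 s + γ * ∑ s'', ∑ a'', ρ s'' a'' * pMhat s'' a'' s) *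
            (π s a * (r s a + γ * ∑ s', pM s a s' * V s')) := by
          refine Finset.sum_congr rfl fun a _ => ?_
          rw [hρ]; ring
      _ = (μ0 s + γ * ∑ s'', ∑ a'', ρ s'' a'' * pMhat s'' a'' s) *
            ∑ a, π s a * (r s a + γ * ∑ s', pM s a s' * V s') :=
          (Finset.mul_sum _ _ _).symm
      _ = _ := by rw [← hV s]
  have hsum : ∑ s, ∑ a, ρ s a * (r s a + γ * ∑ s', pM s a s' * V s')
      = ∑ s, (μ0 s + γ * ∑ s'', ∑ a'', ρ s'' a'' * pMhat s'' a'' s) * V s :=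
    Finset.sum_congr rfl fun s _ => key s
  have e1 : (∑ s, ∑ a, ρ s a * r s a)
        + γ * ∑ s, ∑ a, ρ s a * ∑ s', pM s a s' * V s'
      = ∑ s, ∑ a, ρ s a * (r s a + γ * ∑ s', pM s a s' * V s') := by
    rw [pullγ, ← Finset.sum_add_distrib]
    refine Finset.sum_congr rfl fun s _ => ?_
    rw [← Finset.sum_add_distrib]
    refine Finset.sum_congr rfl fun a _ => ?_
    ring
  have swap : ∑ s, (∑ s'', ∑ a'', ρ s'' a'' * pMhat s'' a'' s) * V s
      = ∑ s, ∑ a, ρ s a * ∑ s', pMhat s a s' * V s' := by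
    have h1 : ∀ s, (∑ s'', ∑ a'', ρ s'' a'' * pMhat s'' a'' s) * V s
        = ∑ s'', ∑ a'', ρ s'' a'' * pMhat s'' a'' s * V s := by
      intro s
      rw [Finset.sum_mul]
      exact Finset.sum_congr rfl fun _ _ => Finset.sum_mul _ _ _
    simp only [h1]
    rw [Finset.sum_comm]
    refine Finset.sum_congr rfl fun s _ => ?_
    rw [Finset.sum_comm]
    refine Finset.sum_congr rfl fun a _ => ?_
    rw [Finset.mul_sum]
    exact Finset.sum_congr rfl fun s' _ => by ring
  have e2 : (∑ s, μ0 s * V s)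
        + γ * ∑ s, ∑ a, ρ s a * ∑ s', pMhat s a s' * V s'
      = ∑ s, (μ0 s + γ * ∑ s'', ∑ a'', ρ s'' a'' * pMhat s'' a'' s) * V s := by
    rw [← swap, pull1, ← Finset.sum_add_distrib]
    refine Finset.sum_congr rfl fun s _ => ?_
    ring
  have e3 : ∑ s, ∑ a, ρ s a * G s a
      = (∑ s, ∑ a, ρ s a * ∑ s', pMhat s a s' * V s')
        - ∑ s, ∑ a, ρ s a * ∑ s', pM s a s' * V s' := by
    simp only [hG, mul_sub, Finset.sum_sub_distrib]
  rw [e3]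
  rw [← e1, ← e2] at hsum
  linarith
end
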